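/- arXiv:1309.7215 — 3 statements merged into one kernel-verified Lean document; each statement's English description precedes it below -/
import Mathlib

section
/- Let i, j, l ≥ 1 be integers and α, β ∈ ℤ with max(0, i−j) ≤ α < i, (i−j, α) ≠ (0, 0), −l < β−α ≤ min(0, j−l), and (j−l, β−α) ≠ (0, 0). Let f : X_i → X_j[α] and g : X_j → X_l[β−α] be nonzero morphisms in the homotopy category. Then the composite g[α] ∘ f : X_i → X_l[β] is nonzero if −l < β ≤ min(0, i−l), and g[α] ∘ f = 0 otherwise. -/
open CategoryTheory CategoryTheory.Limits DualNumber

noncomputable section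
namespace DualNumberPaper
variable (k : Type) [Field k]

set_option linter.unusedVariables false

/-- The degrees in which the complex `X i` is nonzero: `-i ≤ n < 0`. -/
def inRange (i n : ℤ) : Prop := -i ≤ n ∧ n < 0
instance (i n : ℤ) : Decidable (inRange i n) := by unfold inRange; infer_instance

/-- The component of the complex `X i` in degree `n`: the free module `A = k[ε]/(ε²)`
if `-i ≤ n < 0`, and the zero module otherwise. -/
abbrev XMod (i n : ℤ) : ModuleCat (DualNumber k) :=
  ModuleCat.of (DualNumber k) (PLift (inRange i n) → DualNumber k)

/-- The differential of the complex `X i`: multiplication by `ε`. -/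
def XdL (i n m : ℤ) :
    (PLift (inRange i n) → DualNumber k) →ₗ[DualNumber k]
      (PLift (inRange i m) → DualNumber k) where
  toFun f _ := if h : inRange i n then ε * f ⟨h⟩ else 0
  map_add' f g := by
    funext x
    by_cases h : inRange i n <;> simp [h, mul_add]
  map_smul' c f := by
    funext x
    by_cases h : inRange i n <;> simp [h, mul_left_comm]

/-- generic "multiplication by a" map -/
def mm (P Q : Prop) [Decidable P] (a : DualNumber k) :
    (PLift P → DualNumber k) →ₗ[DualNumber k] (PLift Q → DualNumber k) where
  toFun f _ := if h : P then a * f ⟨h⟩ else 0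
  map_add' f g := by funext x; by_cases h : P <;> simp [h, mul_add]
  map_smul' c f := by funext x; by_cases h : P <;> simp [h, mul_left_comm]

variable {k}

lemma mm_apply {P Q : Prop} [Decidable P] (a : DualNumber k) (f : PLift P → DualNumber k)
    (x : PLift Q) : mm k P Q a f x = if h : P then a * f ⟨h⟩ else 0 := rfl

/-- coefficient of a linear map between two such modules -/
def cf {P Q : Prop} [Decidable P] [Decidable Q]
    (F : (PLift P → DualNumber k) →ₗ[DualNumber k] (PLift Q → DualNumber k)) : DualNumber k :=
  if h : P ∧ Q then F (fun _ => 1) ⟨h.2⟩ else 0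

instance plift_sub (P : Prop) : Subsingleton (PLift P) :=
  ⟨fun a b => by cases a; cases b; rfl⟩

lemma fun_eq_smul {P : Prop} (hP : P) (f : PLift P → DualNumber k) :
    f = f ⟨hP⟩ • (fun _ => (1 : DualNumber k)) := by
  funext x
  rw [Subsingleton.elim x ⟨hP⟩]
  simp [Pi.smul_apply, smul_eq_mul]

lemma cf_spec {P Q : Prop} [Decidable P] [Decidable Q]
    (F : (PLift P → DualNumber k) →ₗ[DualNumber k] (PLift Q → DualNumber k)) :
    F = mm k P Q (cf F) := by
  apply LinearMap.ext; intro f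
  funext x
  have hQ : Q := x.down
  by_cases hP : P
  · rw [mm_apply, dif_pos hP, cf, dif_pos ⟨hP, hQ⟩]
    conv_lhs => rw [fun_eq_smul hP f]
    rw [map_smul]
    have : x = ⟨hQ⟩ := Subsingleton.elim _ _
    rw [this]
    simp [smul_eq_mul, mul_comm]
  · have : f = 0 := by funext y; exact absurd y.down hP
    rw [this, map_zero, mm_apply, dif_neg hP]
    rfl

lemma mm_congr {P Q : Prop} [Decidable P] (a b : DualNumber k) (h : P → Q → a = b) :
    mm k P Q a = mm k P Q b := by
  apply LinearMap.ext; intro f; funext x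
  rw [mm_apply, mm_apply]
  by_cases hP : P
  · rw [dif_pos hP, dif_pos hP, h hP x.down]
  · rw [dif_neg hP, dif_neg hP]

lemma mm_inj {P Q : Prop} [Decidable P] (a b : DualNumber k)
    (h : mm k P Q a = mm k P Q b) (hP : P) (hQ : Q) : a = b := by
  have := congrFun (congrArg (fun F => F.toFun (fun _ => 1)) h) ⟨hQ⟩
  simpa [mm_apply, dif_pos hP] using this

lemma mm_comp {P Q R : Prop} [Decidable P] [Decidable Q] (a b : DualNumber k) :
    (mm k Q R b).comp (mm k P Q a) = mm k P R (if Q then b * a else 0) := by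
  apply LinearMap.ext; intro f; funext x
  simp only [LinearMap.comp_apply, mm_apply]
  by_cases hP : P
  · rw [dif_pos hP, dif_pos hP]
    by_cases hQ : Q
    · rw [dif_pos hQ, if_pos hQ, mul_assoc]
    · rw [if_neg hQ, zero_mul]
      simp [mm_apply, dif_neg hQ, mul_zero]
  · rw [dif_neg hP, dif_neg hP]
    split_ifs <;> simp [mul_zero]

lemma mm_add {P Q : Prop} [Decidable P] (a b : DualNumber k) :
    mm k P Q a + mm k P Q b = mm k P Q (a + b) := by
  apply LinearMap.ext; intro f; funext x
  simp only [LinearMap.add_apply, Pi.add_apply, mm_apply]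
  by_cases hP : P
  · simp [dif_pos hP, add_mul]
  · simp [dif_neg hP]

lemma mm_units_smul {P Q : Prop} [Decidable P] (u : ℤˣ) (a : DualNumber k) :
    u • mm k P Q a = mm k P Q (((u : ℤ) : DualNumber k) * a) := by
  apply LinearMap.ext; intro f; funext x
  have : (u • mm k P Q a) f x = (u : ℤ) • (mm k P Q a f x) := rfl
  rw [this, mm_apply, mm_apply]
  by_cases hP : P
  · rw [dif_pos hP, dif_pos hP, zsmul_eq_mul, mul_assoc]
  · rw [dif_neg hP, dif_neg hP, smul_zero]

variable (k)

/-- The complex `X i`, having the free module `A = k[ε]/(ε²)` in degrees `-i, …, -1`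
and `0` elsewhere, with all differentials given by multiplication by `ε`. -/
def Xc (i : ℤ) : CochainComplex (ModuleCat (DualNumber k)) ℤ where
  X n := XMod k i n
  d n m := if _ : n + 1 = m then ModuleCat.ofHom (XdL k i n m) else 0
  shape n m h := dif_neg h
  d_comp_d' n m l hnm hml := by
    have hnm' : n + 1 = m := hnm
    have hml' : m + 1 = l := hml
    try dsimp only
    rw [dif_pos hnm', dif_pos hml']
    apply ModuleCat.hom_ext
    apply LinearMap.ext
    intro f
    funext x
    show (XdL k i m l) ((XdL k i n m) f) x = 0
    simp only [XdL, LinearMap.coe_mk, AddHom.coe_mk]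
    split_ifs with h1 h2 <;>
      simp [← mul_assoc, eps_mul_eps]

abbrev sgnA (δ : ℤ) : DualNumber k := ((δ.negOnePow : ℤ) : DualNumber k)
abbrev sgnk (δ : ℤ) : k := ((δ.negOnePow : ℤ) : k)

variable {k}

lemma oc {R : Type} [Ring R] {M N O : Type} [AddCommGroup M] [AddCommGroup N] [AddCommGroup O]
    [Module R M] [Module R N] [Module R O] (f : M →ₗ[R] N) (g : N →ₗ[R] O) :
    ModuleCat.ofHom f ≫ ModuleCat.ofHom g = ModuleCat.ofHom (g.comp f) := rfl

lemma oa {R : Type} [Ring R] {M N : Type} [AddCommGroup M] [AddCommGroup N]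
    [Module R M] [Module R N] (f g : M →ₗ[R] N) :
    ModuleCat.ofHom f + ModuleCat.ofHom g = ModuleCat.ofHom (f + g) := rfl

lemma ou {R : Type} [Ring R] {M N : Type} [AddCommGroup M] [AddCommGroup N]
    [Module R M] [Module R N] (u : ℤˣ) (f : M →ₗ[R] N) :
    u • ModuleCat.ofHom f = ModuleCat.ofHom (u • f) := rfl

lemma oinj {R : Type} [Ring R] {M N : Type} [AddCommGroup M] [AddCommGroup N]
    [Module R M] [Module R N] {f g : M →ₗ[R] N}
    (h : ModuleCat.ofHom f = ModuleCat.ofHom g) : f = g := congrArg ModuleCat.Hom.hom h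

lemma XdL_eq_mm (i n m : ℤ) : XdL k i n m = mm k (inRange i n) (inRange i m) ε := rfl

lemma Xc_d (i n m : ℤ) :
    (Xc k i).d n m = if _ : n + 1 = m then ModuleCat.ofHom (mm k (inRange i n) (inRange i m) ε) else 0 := rfl

lemma shift1_d (b δ n m : ℤ) :
    ((Xc k b)⟦δ⟧).d n m =
      if n + 1 = m then
        (ModuleCat.ofHom (mm k (inRange b (n + δ)) (inRange b (m + δ)) (sgnA k δ * ε)) :
          XMod k b (n + δ) ⟶ XMod k b (m + δ)) else 0 := by
  show δ.negOnePow • (Xc k b).d (n + δ) (m + δ) = _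
  rw [Xc_d]
  by_cases h : n + 1 = m
  · rw [dif_pos (show n + δ + 1 = m + δ by omega), if_pos h]
    exact (ou _ _).trans (congrArg ModuleCat.ofHom (mm_units_smul _ _))
  · rw [dif_neg (show ¬ n + δ + 1 = m + δ by omega), if_neg h]
    exact smul_zero (A := XMod k b (n + δ) ⟶ XMod k b (m + δ)) _

lemma shift2_d (b δ₁ δ₂ n m : ℤ) :
    (((Xc k b)⟦δ₁⟧)⟦δ₂⟧).d n m =
      if n + 1 = m then
        (ModuleCat.ofHom (mm k (inRange b (n + δ₂ + δ₁)) (inRange b (m + δ₂ + δ₁))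
          ((sgnA k δ₂ * sgnA k δ₁) * ε)) :
          XMod k b (n + δ₂ + δ₁) ⟶ XMod k b (m + δ₂ + δ₁)) else 0 := by
  show δ₂.negOnePow • ((Xc k b)⟦δ₁⟧).d (n + δ₂) (m + δ₂) = _
  rw [shift1_d]
  by_cases h : n + 1 = m
  · rw [if_pos (show n + δ₂ + 1 = m + δ₂ by omega), if_pos h]
    refine (ou _ _).trans ((congrArg ModuleCat.ofHom (mm_units_smul _ _)).trans ?_)
    refine congrArg ModuleCat.ofHom ?_
    apply mm_congr
    intro _ _
    show ((δ₂.negOnePow : ℤ) : DualNumber k) * (sgnA k δ₁ * ε) = _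
    rw [sgnA, mul_assoc]
  · rw [if_neg (show ¬ n + δ₂ + 1 = m + δ₂ by omega), if_neg h]
    exact smul_zero (A := XMod k b (n + δ₂ + δ₁) ⟶ XMod k b (m + δ₂ + δ₁)) _


open TrivSqZeroExt

def coefOf {i b δ : ℤ} (θ : Xc k i ⟶ (Xc k b)⟦δ⟧) (n : ℤ) : DualNumber k :=
  cf (P := inRange i n) (Q := inRange b (n + δ)) (θ.f n).hom

lemma rep1 {i b δ : ℤ} (θ : Xc k i ⟶ (Xc k b)⟦δ⟧) (n : ℤ) :
    θ.f n = (ModuleCat.ofHom (mm k (inRange i n) (inRange b (n + δ)) (coefOf θ n)) :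
      XMod k i n ⟶ XMod k b (n + δ)) := ModuleCat.hom_ext (cf_spec _)

lemma coefOf_zero {i b δ : ℤ} (θ : Xc k i ⟶ (Xc k b)⟦δ⟧) (n : ℤ)
    (h : ¬(inRange i n ∧ inRange b (n + δ))) : coefOf θ n = 0 := dif_neg h

lemma chainRel {i b δ : ℤ} (θ : Xc k i ⟶ (Xc k b)⟦δ⟧) (n : ℤ)
    (h1 : inRange i n) (h2 : inRange b (n + 1 + δ)) :
    (if inRange b (n + δ) then (sgnA k δ * ε) * coefOf θ n else 0)
      = (if inRange i (n + 1) then coefOf θ (n + 1) * ε else 0) := by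
  have h := θ.comm n (n + 1)
  rw [shift1_d, if_pos rfl, Xc_d, dif_pos rfl, rep1 θ n, rep1 θ (n + 1)] at h
  erw [oc, oc] at h
  rw [mm_comp, mm_comp] at h
  exact mm_inj _ _ (oinj h) h1 h2

lemma chainRelK {i b δ : ℤ} (θ : Xc k i ⟶ (Xc k b)⟦δ⟧) (n : ℤ)
    (h1 : inRange i n) (h2 : inRange b (n + 1 + δ)) :
    (if inRange b (n + δ) then sgnk k δ * (coefOf θ n).fst else 0)
      = (if inRange i (n + 1) then (coefOf θ (n + 1)).fst else 0) := by
  have h := congrArg TrivSqZeroExt.snd (chainRel θ n h1 h2)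
  simpa [apply_ite TrivSqZeroExt.snd, mul_assoc] using h

/-- the homotopy data -/
def bHom {i b δ : ℤ} (H : ℤ → DualNumber k) (n m : ℤ) :
    (Xc k i).X n ⟶ ((Xc k b)⟦δ⟧).X m :=
  if m + 1 = n then
    (ModuleCat.ofHom (mm k (inRange i n) (inRange b (m + δ)) (H n)) : XMod k i n ⟶ XMod k b (m + δ)) else 0

lemma upRel (n m : ℤ) (h : n + 1 = m) : (ComplexShape.up ℤ).Rel n m := h

/-- build a null-homotopy from coefficients -/
def buildHomotopy {i b δ : ℤ} (θ : Xc k i ⟶ (Xc k b)⟦δ⟧) (H : ℤ → DualNumber k)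
    (hH : ∀ n, inRange i n → inRange b (n + δ) →
      coefOf θ n = (if inRange i (n + 1) then H (n + 1) * ε else 0)
        + (if inRange b (n - 1 + δ) then (sgnA k δ * ε) * H n else 0)) :
    Homotopy θ 0 where
  hom := bHom H
  zero n m h := if_neg h
  comm n := by
    rw [dNext_eq _ (upRel n (n+1) rfl), prevD_eq _ (upRel (n-1) n (by omega))]
    rw [HomologicalComplex.zero_f]
    show θ.f n = (Xc k i).d n (n+1) ≫ bHom H (n+1) n + bHom H n (n-1) ≫ ((Xc k b)⟦δ⟧).d (n-1) n + 0
    erw [add_zero, bHom, bHom, if_pos rfl, if_pos (show (n-1) + 1 = n by omega),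
      Xc_d, dif_pos rfl, shift1_d, if_pos (show (n-1) + 1 = n by omega),
      rep1 θ n, oc, oc, mm_comp, mm_comp, oa, mm_add]
    exact congrArg ModuleCat.ofHom (mm_congr _ _ (fun hP hQ => hH n hP hQ))


lemma cf_mm {P Q : Prop} [Decidable P] [Decidable Q] (a : DualNumber k) :
    cf (mm k P Q a) = if P ∧ Q then a else 0 := by
  rw [cf]
  by_cases h : P ∧ Q
  · rw [dif_pos h, if_pos h, mm_apply, dif_pos h.1, mul_one]
  · rw [dif_neg h, if_neg h]

def coefOf2 {i b δ₁ δ₂ : ℤ} (θ : Xc k i ⟶ ((Xc k b)⟦δ₁⟧)⟦δ₂⟧) (n : ℤ) : DualNumber k :=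
  cf (P := inRange i n) (Q := inRange b (n + δ₂ + δ₁)) (θ.f n).hom

lemma rep2 {i b δ₁ δ₂ : ℤ} (θ : Xc k i ⟶ ((Xc k b)⟦δ₁⟧)⟦δ₂⟧) (n : ℤ) :
    θ.f n = (ModuleCat.ofHom (mm k (inRange i n) (inRange b (n + δ₂ + δ₁)) (coefOf2 θ n)) :
      XMod k i n ⟶ XMod k b (n + δ₂ + δ₁)) := ModuleCat.hom_ext (cf_spec _)

def bHom2 {i b δ₁ δ₂ : ℤ} (H : ℤ → DualNumber k) (n m : ℤ) :
    (Xc k i).X n ⟶ (((Xc k b)⟦δ₁⟧)⟦δ₂⟧).X m :=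
  if m + 1 = n then
    (ModuleCat.ofHom (mm k (inRange i n) (inRange b (m + δ₂ + δ₁)) (H n)) :
      XMod k i n ⟶ XMod k b (m + δ₂ + δ₁)) else 0

def buildHomotopy2 {i b δ₁ δ₂ : ℤ} (θ : Xc k i ⟶ ((Xc k b)⟦δ₁⟧)⟦δ₂⟧) (H : ℤ → DualNumber k)
    (hH : ∀ n, inRange i n → inRange b (n + δ₂ + δ₁) →
      coefOf2 θ n = (if inRange i (n + 1) then H (n + 1) * ε else 0)
        + (if inRange b (n - 1 + δ₂ + δ₁) then ((sgnA k δ₂ * sgnA k δ₁) * ε) * H n else 0)) :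
    Homotopy θ 0 where
  hom := bHom2 H
  zero n m h := if_neg h
  comm n := by
    rw [dNext_eq _ (upRel n (n+1) rfl), prevD_eq _ (upRel (n-1) n (by omega))]
    rw [HomologicalComplex.zero_f]
    show θ.f n = (Xc k i).d n (n+1) ≫ bHom2 H (n+1) n
      + bHom2 H n (n-1) ≫ (((Xc k b)⟦δ₁⟧)⟦δ₂⟧).d (n-1) n + 0
    erw [add_zero, bHom2, bHom2, if_pos rfl, if_pos (show (n-1) + 1 = n by omega),
      Xc_d, dif_pos rfl, shift2_d, if_pos (show (n-1) + 1 = n by omega),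
      rep2 θ n, oc, oc, mm_comp, mm_comp, oa, mm_add]
    exact congrArg ModuleCat.ofHom (mm_congr _ _ (fun hP hQ => hH n hP hQ))

lemma extract2 {i b δ₁ δ₂ : ℤ} (θ : Xc k i ⟶ ((Xc k b)⟦δ₁⟧)⟦δ₂⟧) (ho : Homotopy θ 0) :
    ∃ y : ℤ → DualNumber k, ∀ n, inRange i n → inRange b (n + δ₂ + δ₁) →
      coefOf2 θ n = (if inRange i (n + 1) then y (n + 1) * ε else 0)
        + (if inRange b (n - 1 + δ₂ + δ₁) then ((sgnA k δ₂ * sgnA k δ₁) * ε) * y n else 0) := by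
  refine ⟨fun n => cf (P := inRange i n) (Q := inRange b (n - 1 + δ₂ + δ₁))
    (ho.hom n (n - 1)).hom, ?_⟩
  intro n hP hQ
  have h := ho.comm n
  rw [dNext_eq _ (upRel n (n+1) rfl), prevD_eq _ (upRel (n-1) n (by omega)),
    HomologicalComplex.zero_f, add_zero] at h
  have e1 : ho.hom (n+1) n = (ModuleCat.ofHom (mm k (inRange i (n+1)) (inRange b (n + δ₂ + δ₁))
      (cf (ho.hom (n+1) n).hom)) : XMod k i (n+1) ⟶ XMod k b (n + δ₂ + δ₁)) :=
    ModuleCat.hom_ext (cf_spec _)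
  have e2 : ho.hom n (n-1) = (ModuleCat.ofHom (mm k (inRange i n) (inRange b (n - 1 + δ₂ + δ₁))
      (cf (ho.hom n (n-1)).hom)) : XMod k i n ⟶ XMod k b (n - 1 + δ₂ + δ₁)) :=
    ModuleCat.hom_ext (cf_spec _)
  erw [e1, e2, Xc_d, dif_pos rfl, shift2_d, if_pos (show (n-1)+1 = n by omega),
    oc, oc, mm_comp, mm_comp, oa, mm_add, rep2] at h
  have h2 := mm_inj _ _ (oinj h) hP hQ
  have e4 : ∀ (m m' : ℤ) (hmm' : m = m'),
      cf (P := inRange i (n+1)) (Q := inRange b (m + δ₂ + δ₁)) (ho.hom (n+1) m).hom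
        = cf (P := inRange i (n+1)) (Q := inRange b (m' + δ₂ + δ₁)) (ho.hom (n+1) m').hom := by
    rintro m m' rfl; rfl
  beta_reduce
  rw [e4 (n + 1 - 1) n (by omega)]
  exact h2

lemma compCoef {i j b α δ : ℤ} (φ : Xc k i ⟶ (Xc k j)⟦α⟧) (ψ : Xc k j ⟶ (Xc k b)⟦δ⟧)
    (n : ℤ) (hP : inRange i n) (hQ : inRange b (n + α + δ)) :
    coefOf2 (φ ≫ (CategoryTheory.shiftFunctor (CochainComplex (ModuleCat (DualNumber k)) ℤ) α).map ψ) n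
      = if inRange j (n + α) then coefOf ψ (n + α) * coefOf φ n else 0 := by
  have hf : (φ ≫ (CategoryTheory.shiftFunctor (CochainComplex (ModuleCat (DualNumber k)) ℤ) α).map ψ).f n
      = φ.f n ≫ ψ.f (n + α) := rfl
  erw [coefOf2, hf, rep1 φ n, rep1 ψ (n + α), oc, mm_comp, ModuleCat.hom_ofHom, cf_mm,
    if_pos ⟨hP, hQ⟩]


/-! ### integer induction helpers and bidiagonal solvers -/

lemma intDescend {P : ℤ → Prop} (M : ℤ) (base : P M)
    (step : ∀ n, n < M → P (n + 1) → P n) : ∀ n, n ≤ M → P n := by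
  have key : ∀ t : ℕ, P (M - t) := by
    intro t
    induction t with
    | zero => simpa using base
    | succ s ih =>
        have h1 : M - (s + 1 : ℕ) + 1 = M - s := by push_cast; ring
        refine step _ (by push_cast; omega) ?_
        rw [h1]; exact ih
  intro n hn
  have : n = M - ((M - n).toNat : ℤ) := by omega
  rw [this]; exact key _

lemma intAscend {P : ℤ → Prop} (m : ℤ) (base : P m)
    (step : ∀ n, m ≤ n → P n → P (n + 1)) : ∀ n, m ≤ n → P n := by
  have key : ∀ t : ℕ, P (m + t) := by
    intro t
    induction t with
    | zero => simpa using base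
    | succ s ih =>
        have h1 : m + (s + 1 : ℕ) = (m + s) + 1 := by push_cast; ring
        rw [h1]; exact step _ (by omega) ih
  intro n hn
  have : n = m + ((n - m).toNat : ℤ) := by omega
  rw [this]; exact key _

section solvers

variable (p q : ℤ → Prop) [DecidablePred p] [DecidablePred q]
variable (σ : k) (E : ℤ → k)

/-- downward solver for the bidiagonal system -/
lemma solveDown (hσ : σ * σ = 1) (M : ℤ)
    (hM : ∀ n, p n → q n → n ≤ M)
    (hq : ∀ n, p n → q n → q (n - 1)) :
    ∃ x : ℤ → k, ∀ n, p n → q n →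
      E n = (if p (n + 1) then x (n + 1) else 0) + (if q (n - 1) then σ * x n else 0) := by
  classical
  let g : ℕ → k := fun t => Nat.rec (σ * E M)
    (fun s ih => σ * (E (M - (s + 1)) - (if p (M - s) then ih else 0))) t
  have hg0 : g 0 = σ * E M := rfl
  have hgs : ∀ s : ℕ, g (s + 1) = σ * (E (M - (s + 1)) - (if p (M - s) then g s else 0)) :=
    fun s => rfl
  refine ⟨fun n => if M < n then 0 else g (M - n).toNat, ?_⟩
  intro n hp' hq'
  beta_reduce
  have hnM : n ≤ M := hM n hp' hq'
  rw [if_pos (hq n hp' hq')]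
  by_cases hEq : n = M
  · have hx : (if M < n + 1 then (0:k) else g (M - (n+1)).toNat) = 0 := by
      rw [if_pos (by omega)]
    have hxn : (if M < n then (0:k) else g (M - n).toNat) = σ * E n := by
      rw [if_neg (by omega), show (M - n).toNat = 0 from by omega, hg0, hEq]
    rw [hx, hxn, ← mul_assoc, hσ, one_mul]
    simp
  · have hlt : n < M := lt_of_le_of_ne hnM hEq
    have ht : (M - n).toNat = ((M - n - 1).toNat) + 1 := by omega
    have hxn : (if M < n then (0:k) else g (M - n).toNat)
        = σ * (E n - (if p (n + 1) then g (M - n - 1).toNat else 0)) := by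
      rw [if_neg (by omega), ht, hgs]
      have h1 : M - ((M - n - 1).toNat : ℤ) - 1 = n := by omega
      have h2 : M - ((M - n - 1).toNat : ℤ) = n + 1 := by omega
      rw [show (M : ℤ) - (((M - n - 1).toNat : ℤ) + 1) = n from by omega, h2]
    have hxn1 : (if M < n + 1 then (0:k) else g (M - (n+1)).toNat) = g (M - n - 1).toNat := by
      rw [if_neg (by omega), show M - (n+1) = M - n - 1 from by omega]
    rw [hxn1, hxn]
    generalize (if p (n + 1) then g (M - n - 1).toNat else (0:k)) = w
    rw [← mul_assoc, hσ, one_mul]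
    ring

/-- upward solver for the bidiagonal system -/
lemma solveUp (hσ : σ * σ = 1) (m : ℤ)
    (hm : ∀ n, p n → q n → m ≤ n)
    (hp : ∀ n, p n → q n → p (n + 1)) :
    ∃ x : ℤ → k, ∀ n, p n → q n →
      E n = (if p (n + 1) then x (n + 1) else 0) + (if q (n - 1) then σ * x n else 0) := by
  classical
  let g : ℕ → k := fun t => Nat.rec (E m)
    (fun s ih => E (m + (s + 1)) - (if q (m + s) then σ * ih else 0)) t
  have hg0 : g 0 = E m := rfl
  have hgs : ∀ s : ℕ, g (s + 1) = E (m + (s + 1)) - (if q (m + s) then σ * g s else 0) :=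
    fun s => rfl
  refine ⟨fun n => if n ≤ m then 0 else g (n - m - 1).toNat, ?_⟩
  intro n hp' hq'
  beta_reduce
  have hnm : m ≤ n := hm n hp' hq'
  rw [if_pos (hp n hp' hq')]
  have hxn1 : (if n + 1 ≤ m then (0:k) else g (n + 1 - m - 1).toNat) = g (n - m).toNat := by
    rw [if_neg (by omega), show n + 1 - m - 1 = n - m from by omega]
  rw [hxn1]
  by_cases hEq : n = m
  · rw [show (n - m).toNat = 0 from by omega, hg0,
      if_pos (show n ≤ m from by omega)]
    rw [hEq]
    simp
  · have hlt : m < n := lt_of_le_of_ne hnm (fun h => hEq h.symm)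
    have ht : (n - m).toNat = ((n - m - 1).toNat) + 1 := by omega
    have hxn : (if n ≤ m then (0:k) else g (n - m - 1).toNat) = g (n - m - 1).toNat :=
      if_neg (by omega)
    have h1 : m + (((n - m - 1).toNat : ℤ) + 1) = n := by omega
    have h2 : m + ((n - m - 1).toNat : ℤ) = n - 1 := by omega
    rw [hxn, ht, hgs, h1, h2]
    by_cases hq1 : q (n - 1) <;> simp [hq1]

end solvers


lemma inRange_intro {i n : ℤ} (h1 : -i ≤ n) (h2 : n < 0) : inRange i n := ⟨h1, h2⟩

lemma sgnk_sq (δ : ℤ) : sgnk k δ * sgnk k δ = 1 := by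
  have : ((δ.negOnePow * δ.negOnePow : ℤˣ) : ℤ) = 1 := by
    rw [Int.units_mul_self]; rfl
  have h2 : (sgnk k δ) * (sgnk k δ) = (((δ.negOnePow * δ.negOnePow : ℤˣ) : ℤ) : k) := by
    push_cast
    rfl
  rw [h2, this]
  norm_num

section phiFacts

variable {i j α : ℤ}

lemma phi_re (hi : 1 ≤ i) (hj : 1 ≤ j) (hij : i - j ≤ α) (hα0 : 0 ≤ α) (hαi : α < i)
    (φ : Xc k i ⟶ (Xc k j)⟦α⟧) :
    ∀ n, -i ≤ n → n ≤ -1 - α →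
      (coefOf φ n).fst = sgnk k α ^ (-1 - α - n).toNat * (coefOf φ (-1 - α)).fst := by
  have key := intDescend (M := -1 - α)
    (P := fun n => -i ≤ n →
      (coefOf φ n).fst = sgnk k α ^ (-1 - α - n).toNat * (coefOf φ (-1 - α)).fst)
    (by intro _; simp) ?_
  · intro n h1 h2; exact key n h2 h1
  · intro n hlt ih hin
    have rel := chainRelK φ n (inRange_intro hin (by omega))
      (inRange_intro (by omega) (by omega))
    rw [if_pos (inRange_intro (by omega) (by omega) : inRange j (n + α)),
      if_pos (inRange_intro (by omega) (by omega) : inRange i (n + 1))] at rel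
    have ihv := ih (by omega)
    have : (coefOf φ n).fst = sgnk k α * (coefOf φ (n + 1)).fst := by
      have := congrArg (fun z => sgnk k α * z) rel
      simpa only [← mul_assoc, sgnk_sq, one_mul] using this
    rw [this, ihv, show (-1 - α - n).toNat = (-1 - α - (n + 1)).toNat + 1 from by omega,
      pow_succ]
    ring

lemma phi_null (hi : 1 ≤ i) (hj : 1 ≤ j) (hij : i - j ≤ α) (hα0 : 0 ≤ α) (hαi : α < i)
    (h3 : ¬(i - j = 0 ∧ α = 0))
    (φ : Xc k i ⟶ (Xc k j)⟦α⟧) (hc : (coefOf φ (-1 - α)).fst = 0) :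
    Nonempty (Homotopy φ 0) := by
  have hre : ∀ n, inRange i n → inRange j (n + α) → (coefOf φ n).fst = 0 := by
    intro n hn hm
    have hm2 := hm.2
    rw [phi_re hi hj hij hα0 hαi φ n hn.1 (by omega), hc, mul_zero]
  have hsol : ∃ x : ℤ → k, ∀ n, inRange i n → inRange j (n + α) →
      (coefOf φ n).snd = (if inRange i (n + 1) then x (n + 1) else 0)
        + (if inRange j (n - 1 + α) then sgnk k α * x n else 0) := by
    by_cases hα : α = 0
    · have hij' : i < j := by
        rcases lt_or_ge i j with h | h
        · exact h
        · exfalso; exact h3 ⟨by omega, hα⟩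
      refine solveDown (fun n => inRange i n) (fun n => inRange j (n + α)) (sgnk k α)
        (fun n => (coefOf φ n).snd) (sgnk_sq α) (-1) ?_ ?_
      · intro n hp hq
        have := hp.2; omega
      · intro n hp hq
        have e1 := hp.1; have e2 := hp.2
        exact inRange_intro (by omega) (by omega)
    · have hα1 : 1 ≤ α := by omega
      refine solveUp (fun n => inRange i n) (fun n => inRange j (n + α)) (sgnk k α)
        (fun n => (coefOf φ n).snd) (sgnk_sq α) (-i) ?_ ?_
      · intro n hp hq
        exact hp.1
      · intro n hp hq
        have e1 := hp.1; have e2 := hq.2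
        exact inRange_intro (by omega) (by omega)
  obtain ⟨x, hx⟩ := hsol
  refine ⟨buildHomotopy φ (fun n => TrivSqZeroExt.inl (x n)) ?_⟩
  intro n hP hQ
  have hfst := hre n hP hQ
  have hsnd := hx n hP hQ
  apply TrivSqZeroExt.ext
  · rw [hfst]
    simp [apply_ite TrivSqZeroExt.fst]
  · rw [hsnd]
    simp [apply_ite TrivSqZeroExt.snd, mul_assoc, mul_comm]

end phiFacts

section psiFacts

variable {j l δ : ℤ}

lemma psi_re (hj : 1 ≤ j) (hl : 1 ≤ l) (hδl : -l < δ) (hδ0 : δ ≤ 0) (hδjl : δ ≤ j - l)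
    (h6 : ¬(j - l = 0 ∧ δ = 0))
    (ψ : Xc k j ⟶ (Xc k l)⟦δ⟧) : ∀ t, (coefOf ψ t).fst = 0 := by
  have main : ∀ t, inRange j t → inRange l (t + δ) → (coefOf ψ t).fst = 0 := by
    by_cases hδneg : δ ≤ -1
    · -- propagate downwards from the top degree -1
      have key := intDescend (M := -1)
        (P := fun t => -j ≤ t → -l - δ ≤ t → (coefOf ψ t).fst = 0) ?_ ?_
      · intro t ht1 ht2
        have e1 := ht1.1; have e2 := ht1.2; have e3 := ht2.1
        exact key t (by omega) (by omega) (by omega)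
      · intro h1 h2
        have rel := chainRelK ψ (-1) (inRange_intro (by omega) (by omega))
          (inRange_intro (by omega) (by omega))
        rw [if_pos (inRange_intro (by omega) (by omega) : inRange l (-1 + δ)),
          if_neg (show ¬ inRange j (-1 + 1) from fun h => by
            have := h.2; omega)] at rel
        have h5 := congrArg (fun z => sgnk k δ * z) rel
        simpa [← mul_assoc, sgnk_sq] using h5
      · intro t hlt ih h1 h2
        have rel := chainRelK ψ t (inRange_intro (by omega) (by omega))
          (inRange_intro (by omega) (by omega))
        rw [if_pos (inRange_intro (by omega) (by omega) : inRange l (t + δ)),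
          if_pos (inRange_intro (by omega) (by omega) : inRange j (t + 1)),
          ih (by omega) (by omega)] at rel
        have h5 := congrArg (fun z => sgnk k δ * z) rel
        simpa [← mul_assoc, sgnk_sq] using h5
    · -- δ = 0 and j > l : propagate upwards from the bottom degree -l
      have hδz : δ = 0 := by omega
      have hjl : l < j := by
        rcases lt_or_ge l j with h | h
        · exact h
        · exfalso; exact h6 ⟨by omega, hδz⟩
      have base : (coefOf ψ (-l)).fst = 0 := by
        have rel := chainRelK ψ (-l - 1) (inRange_intro (by omega) (by omega))
          (inRange_intro (by omega) (by omega))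
        rw [if_neg (show ¬ inRange l (-l - 1 + δ) from fun h => by
            have := h.1; omega),
          if_pos (inRange_intro (by omega) (by omega) : inRange j (-l - 1 + 1))] at rel
        rw [show (-l : ℤ) = -l - 1 + 1 from by omega]
        exact rel.symm
      have key := intAscend (m := -l)
        (P := fun t => t ≤ -1 → (coefOf ψ t).fst = 0) (fun _ => base) ?_
      · intro t ht1 ht2
        have e1 := ht2.1; have e2 := ht1.2
        exact key t (by omega) (by omega)
      · intro t hml ih ht1
        have rel := chainRelK ψ t (inRange_intro (by omega) (by omega))
          (inRange_intro (by omega) (by omega))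
        rw [if_pos (inRange_intro (by omega) (by omega) : inRange l (t + δ)),
          if_pos (inRange_intro (by omega) (by omega) : inRange j (t + 1)),
          ih (by omega)] at rel
        rw [← rel, mul_zero]
  intro t
  by_cases hS : inRange j t ∧ inRange l (t + δ)
  · exact main t hS.1 hS.2
  · rw [coefOf_zero ψ t hS]
    rfl

end psiFacts


section mainLemmas

variable {i j l α β : ℤ}

lemma sgn2_sq : (sgnk k α * sgnk k (β - α)) * (sgnk k α * sgnk k (β - α)) = 1 := by
  have h1 := sgnk_sq (k := k) α
  have h2 := sgnk_sq (k := k) (β - α)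
  calc (sgnk k α * sgnk k (β - α)) * (sgnk k α * sgnk k (β - α))
      = (sgnk k α * sgnk k α) * (sgnk k (β - α) * sgnk k (β - α)) := by ring
    _ = 1 := by rw [h1, h2, one_mul]

lemma case2 (hi : 1 ≤ i) (hj : 1 ≤ j) (hl : 1 ≤ l)
    (hij : i - j ≤ α) (hα0 : 0 ≤ α) (hαi : α < i)
    (hδl : -l < β - α) (hδ0 : β - α ≤ 0) (hδjl : β - α ≤ j - l)
    (h6 : ¬(j - l = 0 ∧ β - α = 0))
    (hout : 0 < β ∨ i - l < β)
    (φ : Xc k i ⟶ (Xc k j)⟦α⟧) (ψ : Xc k j ⟶ (Xc k l)⟦β - α⟧) :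
    Nonempty (Homotopy
      (φ ≫ (CategoryTheory.shiftFunctor (CochainComplex (ModuleCat (DualNumber k)) ℤ) α).map ψ) 0) := by
  have hψre := psi_re hj hl hδl hδ0 hδjl h6 ψ
  set χ := φ ≫ (CategoryTheory.shiftFunctor (CochainComplex (ModuleCat (DualNumber k)) ℤ) α).map ψ
    with hχ
  have hχfst : ∀ n, inRange i n → inRange l (n + α + (β - α)) → (coefOf2 χ n).fst = 0 := by
    intro n hP hQ
    rw [compCoef φ ψ n hP hQ]
    by_cases h : inRange j (n + α)
    · rw [if_pos h]
      simp [hψre]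
    · rw [if_neg h]
      rfl
  have hsol : ∃ x : ℤ → k, ∀ n, inRange i n → inRange l (n + α + (β - α)) →
      (coefOf2 χ n).snd = (if inRange i (n + 1) then x (n + 1) else 0)
        + (if inRange l (n - 1 + α + (β - α)) then (sgnk k α * sgnk k (β - α)) * x n else 0) := by
    rcases hout with hb | hb
    · refine solveUp (fun n => inRange i n) (fun n => inRange l (n + α + (β - α)))
        (sgnk k α * sgnk k (β - α)) (fun n => (coefOf2 χ n).snd) sgn2_sq (-i) ?_ ?_
      · intro n hp hq
        exact hp.1
      · intro n hp hq
        have e1 := hp.1; have e2 := hq.2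
        exact inRange_intro (by omega) (by omega)
    · refine solveDown (fun n => inRange i n) (fun n => inRange l (n + α + (β - α)))
        (sgnk k α * sgnk k (β - α)) (fun n => (coefOf2 χ n).snd) sgn2_sq (-1) ?_ ?_
      · intro n hp hq
        have := hp.2; omega
      · intro n hp hq
        have e1 := hp.1; have e2 := hp.2; have e3 := hq.1; have e4 := hq.2
        exact inRange_intro (by omega) (by omega)
  obtain ⟨x, hx⟩ := hsol
  refine ⟨buildHomotopy2 χ (fun n => TrivSqZeroExt.inl (x n)) ?_⟩
  intro n hP hQ
  have hfst := hχfst n hP hQ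
  have hsnd := hx n hP hQ
  apply TrivSqZeroExt.ext
  · rw [hfst]
    simp [apply_ite TrivSqZeroExt.fst]
  · rw [hsnd]
    simp [apply_ite TrivSqZeroExt.snd, mul_assoc, mul_comm, mul_left_comm]

end mainLemmas


section caseOne

variable {i j l α β : ℤ}

lemma case1 (hi : 1 ≤ i) (hj : 1 ≤ j) (hl : 1 ≤ l)
    (hij : i - j ≤ α) (hα0 : 0 ≤ α) (hαi : α < i)
    (hδl : -l < β - α) (hδ0 : β - α ≤ 0)
    (hβ0 : β ≤ 0) (hβil : β ≤ i - l)
    (φ : Xc k i ⟶ (Xc k j)⟦α⟧) (ψ : Xc k j ⟶ (Xc k l)⟦β - α⟧)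
    (hc : (coefOf φ (-1 - α)).fst ≠ 0)
    (hψre : ∀ t, (coefOf ψ t).fst = 0)
    (ho : Homotopy
      (φ ≫ (CategoryTheory.shiftFunctor (CochainComplex (ModuleCat (DualNumber k)) ℤ) α).map ψ) 0) :
    Nonempty (Homotopy ψ 0) := by
  obtain ⟨y, hy⟩ := extract2 _ ho
  have hyk : ∀ n, inRange i n → inRange l (n + α + (β - α)) →
      (if inRange j (n + α) then (coefOf ψ (n + α)).snd * (coefOf φ n).fst else 0)
        = (if inRange i (n + 1) then (y (n + 1)).fst else 0)
          + (if inRange l (n - 1 + α + (β - α)) then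
              (sgnk k α * sgnk k (β - α)) * (y n).fst else 0) := by
    intro n hP hQ
    have h := congrArg TrivSqZeroExt.snd (hy n hP hQ)
    rw [compCoef φ ψ n hP hQ] at h
    simpa [apply_ite TrivSqZeroExt.snd, hψre, mul_comm, mul_assoc, mul_left_comm] using h
  -- the coefficients of the homotopy for χ vanish in degrees -α ≤ n ≤ -1
  have hYzero : ∀ n, -α ≤ n → n ≤ -1 → (y n).fst = 0 := by
    have key := intDescend (M := -1) (P := fun n => -α ≤ n → (y n).fst = 0) ?_ ?_
    · intro n h1 h2; exact key n h2 h1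
    · -- base n = -1
      intro h1
      have hn := hyk (-1) (inRange_intro (by omega) (by omega))
        (inRange_intro (by omega) (by omega))
      rw [if_neg (show ¬ inRange j (-1 + α) from fun h => by have := h.2; omega),
        if_neg (show ¬ inRange i (-1 + 1) from fun h => by have := h.2; omega),
        if_pos (inRange_intro (by omega) (by omega) : inRange l (-1 - 1 + α + (β - α)))] at hn
      rw [zero_add] at hn
      calc (y (-1)).fst
          = ((sgnk k α * sgnk k (β - α)) * (sgnk k α * sgnk k (β - α))) * (y (-1)).fst := by
            rw [sgn2_sq, one_mul]
        _ = (sgnk k α * sgnk k (β - α)) * ((sgnk k α * sgnk k (β - α)) * (y (-1)).fst) := by ring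
        _ = 0 := by rw [← hn, mul_zero]
    · -- step
      intro n hlt ih h1
      have hn := hyk n (inRange_intro (by omega) (by omega))
        (inRange_intro (by omega) (by omega))
      rw [if_neg (show ¬ inRange j (n + α) from fun h => by have := h.2; omega),
        if_pos (inRange_intro (by omega) (by omega) : inRange i (n + 1)),
        ih (by omega),
        if_pos (inRange_intro (by omega) (by omega) : inRange l (n - 1 + α + (β - α)))] at hn
      rw [zero_add] at hn
      calc (y n).fst
          = ((sgnk k α * sgnk k (β - α)) * (sgnk k α * sgnk k (β - α))) * (y n).fst := by
            rw [sgn2_sq, one_mul]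
        _ = (sgnk k α * sgnk k (β - α)) * ((sgnk k α * sgnk k (β - α)) * (y n).fst) := by ring
        _ = 0 := by rw [← hn, mul_zero]
  -- build the null homotopy for ψ
  refine ⟨buildHomotopy ψ (fun t => TrivSqZeroExt.inl
    ((coefOf φ (-1 - α)).fst⁻¹ * sgnk k α ^ ((-1 - t).toNat + 1) * (y (t - α)).fst)) ?_⟩
  intro t hjt hlt'
  have e1 := hjt.1; have e2 := hjt.2; have e3 := hlt'.1; have e4 := hlt'.2
  have key : (coefOf ψ t).snd
      = (if inRange j (t + 1) then
          (coefOf φ (-1 - α)).fst⁻¹ * sgnk k α ^ ((-1 - (t+1)).toNat + 1) * (y (t + 1 - α)).fst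
        else 0)
        + (if inRange l (t - 1 + (β - α)) then
            sgnk k (β - α) *
              ((coefOf φ (-1 - α)).fst⁻¹ * sgnk k α ^ ((-1 - t).toNat + 1) * (y (t - α)).fst)
          else 0) := by
    by_cases ht : t = -1
    · subst ht
      have hn := hyk (-1 - α) (inRange_intro (by omega) (by omega))
        (inRange_intro (by omega) (by omega))
      rw [if_pos (inRange_intro (by omega) (by omega) : inRange j (-1 - α + α))] at hn
      rw [show (-1 : ℤ) - α + α = -1 from by omega] at hn
      have hterm1 : (if inRange i (-1 - α + 1) then (y (-1 - α + 1)).fst else 0) = 0 := by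
        by_cases hα1 : 1 ≤ α
        · rw [if_pos (inRange_intro (by omega) (by omega)),
            show (-1 : ℤ) - α + 1 = -α from by omega, hYzero (-α) (le_refl _) (by omega)]
        · rw [if_neg (show ¬ inRange i (-1 - α + 1) from fun h => by have := h.2; omega)]
      rw [hterm1, zero_add] at hn
      rw [if_neg (show ¬ inRange j (-1 + 1) from fun h => by have := h.2; omega), zero_add]
      by_cases hF : -l ≤ -1 - 1 + (β - α)
      · rw [if_pos (inRange_intro hF (by omega))]
        rw [if_pos (inRange_intro (by omega) (by omega) :
          inRange l (-1 - α - 1 + α + (β - α)))] at hn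
        rw [show (-1 - (-1) : ℤ).toNat + 1 = 1 from by omega, pow_one]
        have hexp : (coefOf φ (-1 - α)).fst⁻¹ * ((coefOf ψ (-1)).snd * (coefOf φ (-1 - α)).fst)
            = (coefOf ψ (-1)).snd := by
          rw [show (coefOf φ (-1 - α)).fst⁻¹ * ((coefOf ψ (-1)).snd * (coefOf φ (-1 - α)).fst)
            = ((coefOf φ (-1 - α)).fst⁻¹ * (coefOf φ (-1 - α)).fst) * (coefOf ψ (-1)).snd
            from by ring, inv_mul_cancel₀ hc, one_mul]
        rw [← hexp, hn]
        ring
      · rw [if_neg (show ¬ inRange l (-1 - 1 + (β - α)) from fun h => hF h.1)]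
        rw [if_neg (show ¬ inRange l (-1 - α - 1 + α + (β - α)) from fun h => by
          have := h.1; omega)] at hn
        rcases mul_eq_zero.mp hn with h0 | h0
        · rw [h0]
        · exact absurd h0 hc
    · -- t ≤ -2
      have ht2 : t ≤ -2 := by omega
      have hn := hyk (t - α) (inRange_intro (by omega) (by omega))
        (inRange_intro (by omega) (by omega))
      rw [if_pos (inRange_intro (by omega) (by omega) : inRange j (t - α + α))] at hn
      rw [show t - α + α = t from by omega] at hn
      rw [if_pos (inRange_intro (by omega) (by omega) : inRange i (t - α + 1))] at hn
      rw [phi_re hi hj hij hα0 hαi φ (t - α) (by omega) (by omega)] at hn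
      rw [show (-1 - α - (t - α) : ℤ) = -1 - t from by omega] at hn
      rw [if_pos (inRange_intro (by omega) (by omega) : inRange j (t + 1))]
      rw [show ((-1 - (t + 1) : ℤ)).toNat + 1 = (-1 - t).toNat from by omega]
      rw [show (t + 1 - α : ℤ) = t - α + 1 from by omega]
      have hsw : sgnk k α ^ (-1 - t).toNat * sgnk k α ^ (-1 - t).toNat = 1 := by
        rw [← mul_pow, sgnk_sq, one_pow]
      by_cases hF : -l ≤ t - 1 + (β - α)
      · rw [if_pos (inRange_intro hF (by omega))]
        rw [if_pos (inRange_intro (by omega) (by omega) :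
          inRange l (t - α - 1 + α + (β - α)))] at hn
        have hexp : (coefOf φ (-1 - α)).fst⁻¹ * sgnk k α ^ (-1 - t).toNat
              * ((coefOf ψ t).snd * (sgnk k α ^ (-1 - t).toNat * (coefOf φ (-1 - α)).fst))
            = (coefOf ψ t).snd := by
          rw [show (coefOf φ (-1 - α)).fst⁻¹ * sgnk k α ^ (-1 - t).toNat
              * ((coefOf ψ t).snd * (sgnk k α ^ (-1 - t).toNat * (coefOf φ (-1 - α)).fst))
            = (sgnk k α ^ (-1 - t).toNat * sgnk k α ^ (-1 - t).toNat)
              * (((coefOf φ (-1 - α)).fst⁻¹ * (coefOf φ (-1 - α)).fst) * (coefOf ψ t).snd)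
            from by ring, hsw, inv_mul_cancel₀ hc, one_mul, one_mul]
        rw [← hexp, hn]
        ring
      · rw [if_neg (show ¬ inRange l (t - 1 + (β - α)) from fun h => hF h.1)]
        rw [if_neg (show ¬ inRange l (t - α - 1 + α + (β - α)) from fun h => by
          have := h.1; omega), add_zero] at hn
        rw [add_zero]
        have hexp : (coefOf φ (-1 - α)).fst⁻¹ * sgnk k α ^ (-1 - t).toNat
              * ((coefOf ψ t).snd * (sgnk k α ^ (-1 - t).toNat * (coefOf φ (-1 - α)).fst))
            = (coefOf ψ t).snd := by
          rw [show (coefOf φ (-1 - α)).fst⁻¹ * sgnk k α ^ (-1 - t).toNat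
              * ((coefOf ψ t).snd * (sgnk k α ^ (-1 - t).toNat * (coefOf φ (-1 - α)).fst))
            = (sgnk k α ^ (-1 - t).toNat * sgnk k α ^ (-1 - t).toNat)
              * (((coefOf φ (-1 - α)).fst⁻¹ * (coefOf φ (-1 - α)).fst) * (coefOf ψ t).snd)
            from by ring, hsw, inv_mul_cancel₀ hc, one_mul, one_mul]
        rw [← hexp, hn]
  apply TrivSqZeroExt.ext
  · rw [hψre]
    simp [apply_ite TrivSqZeroExt.fst]
  · rw [key]
    simp [apply_ite TrivSqZeroExt.snd, mul_comm, mul_assoc, mul_left_comm]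

end caseOne


variable (k)

/-- The homotopy category of cochain complexes of modules over the dual numbers. -/
abbrev K := HomotopyCategory (ModuleCat (DualNumber k)) (ComplexShape.up ℤ)

/-- The object of the homotopy category determined by the complex `X i`. -/
abbrev XK (i : ℤ) : K k := (HomotopyCategory.quotient _ _).obj (Xc k i)

variable {k}

section glue

lemma comp_isIso_eq_zero_iff {C : Type*} [Category C] [Preadditive C] {X Y Z : C}
    (x : X ⟶ Y) (w : Y ⟶ Z) [IsIso w] : x ≫ w = 0 ↔ x = 0 := by
  constructor
  · intro h
    rw [← Category.comp_id x, ← IsIso.hom_inv_id w, ← Category.assoc, h, zero_comp]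
  · intro h
    rw [h, zero_comp]

lemma qmap_zero_iff {X Y : CochainComplex (ModuleCat (DualNumber k)) ℤ} (θ : X ⟶ Y) :
    (HomotopyCategory.quotient (ModuleCat (DualNumber k)) (ComplexShape.up ℤ)).map θ = 0
      ↔ Nonempty (Homotopy θ 0) := by
  constructor
  · intro h
    exact ⟨HomotopyCategory.homotopyOfEq _ _ (by rw [h, Functor.map_zero])⟩
  · rintro ⟨h⟩
    rw [HomotopyCategory.eq_of_homotopy _ _ h, Functor.map_zero]

end glue

variable (k)

/-- composition of a nonzero morphism of `k₁`-type with a nonzero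
morphism of `k_ε`-type. -/
theorem composition_one_eps (i j l : ℤ) (hi : 1 ≤ i) (hj : 1 ≤ j) (hl : 1 ≤ l) (α β : ℤ)
    (h1 : max 0 (i - j) ≤ α) (h2 : α < i) (h3 : (i - j, α) ≠ (0, 0))
    (h4 : -l < β - α) (h5 : β - α ≤ min 0 (j - l)) (h6 : (j - l, β - α) ≠ (0, 0))
    (f : XK k i ⟶ (XK k j)⟦α⟧) (g : XK k j ⟶ (XK k l)⟦β - α⟧)
    (hf : f ≠ 0) (hg : g ≠ 0) :
    (-l < β ∧ β ≤ min 0 (i - l) → f ≫ (shiftFunctor (K k) α).map g ≠ 0) ∧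
    (¬(-l < β ∧ β ≤ min 0 (i - l)) → f ≫ (shiftFunctor (K k) α).map g = 0) := by
  have hα0 : 0 ≤ α := le_trans (le_max_left _ _) h1
  have hij : i - j ≤ α := le_trans (le_max_right _ _) h1
  have hδ0 : β - α ≤ 0 := le_trans h5 (min_le_left _ _)
  have hδjl : β - α ≤ j - l := le_trans h5 (min_le_right _ _)
  have h3' : ¬(i - j = 0 ∧ α = 0) := fun ⟨a, b⟩ => h3 (by rw [a, b])
  have h6' : ¬(j - l = 0 ∧ β - α = 0) := fun ⟨a, b⟩ => h6 (by rw [a, b])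
  set Q := HomotopyCategory.quotient (ModuleCat (DualNumber k)) (ComplexShape.up ℤ) with hQdef
  obtain ⟨φ, hφ⟩ := Q.map_surjective (f ≫ (Q.commShiftIso α).inv.app (Xc k j))
  obtain ⟨ψ, hψ⟩ := Q.map_surjective (g ≫ (Q.commShiftIso (β - α)).inv.app (Xc k l))
  have hf2 : f = Q.map φ ≫ (Q.commShiftIso α).hom.app (Xc k j) := by
    rw [hφ, Category.assoc, Iso.inv_hom_id_app]
    exact (Category.comp_id f).symm
  have hg2 : g = Q.map ψ ≫ (Q.commShiftIso (β - α)).hom.app (Xc k l) := by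
    rw [hψ, Category.assoc, Iso.inv_hom_id_app]
    exact (Category.comp_id g).symm
  have hmid : (Q.commShiftIso α).hom.app (Xc k j) ≫ (shiftFunctor (K k) α).map (Q.map ψ)
      = Q.map ((CategoryTheory.shiftFunctor (CochainComplex (ModuleCat (DualNumber k)) ℤ) α).map ψ)
        ≫ (Q.commShiftIso α).hom.app ((Xc k l)⟦β - α⟧) :=
    ((Q.commShiftIso α).hom.naturality ψ).symm
  have hcomp : f ≫ (shiftFunctor (K k) α).map g
      = Q.map (φ ≫ (CategoryTheory.shiftFunctor (CochainComplex (ModuleCat (DualNumber k)) ℤ) α).map ψ)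
        ≫ ((Q.commShiftIso α).hom.app ((Xc k l)⟦β - α⟧)
          ≫ (shiftFunctor (K k) α).map ((Q.commShiftIso (β - α)).hom.app (Xc k l))) := by
    rw [hf2, hg2]
    simp only [Functor.map_comp, Category.assoc]
    rw [← Category.assoc ((Q.commShiftIso α).hom.app (Xc k j)), hmid]
    simp only [Category.assoc, ← Functor.map_comp]
  have hfne : Q.map φ ≠ 0 := by
    intro h0
    exact hf (by rw [hf2, h0, zero_comp])
  have hgne : Q.map ψ ≠ 0 := by
    intro h0
    exact hg (by rw [hg2, h0, zero_comp])
  have hcne : (coefOf φ (-1 - α)).fst ≠ 0 := by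
    intro h0
    obtain ⟨hh⟩ := phi_null hi hj hij hα0 h2 h3' φ h0
    exact hfne (by rw [HomotopyCategory.eq_of_homotopy _ _ hh, Functor.map_zero])
  have hψre := psi_re hj hl h4 hδ0 hδjl h6' ψ
  constructor
  · intro hin h0
    have hβ0 : β ≤ 0 := le_trans hin.2 (min_le_left _ _)
    have hβil : β ≤ i - l := le_trans hin.2 (min_le_right _ _)
    rw [hcomp, comp_isIso_eq_zero_iff, qmap_zero_iff] at h0
    obtain ⟨ho⟩ := h0
    obtain ⟨hψ0⟩ := case1 hi hj hl hij hα0 h2 h4 hδ0 hβ0 hβil φ ψ hcne hψre ho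
    exact hgne (by rw [HomotopyCategory.eq_of_homotopy _ _ hψ0, Functor.map_zero])
  · intro hout
    have hout' : 0 < β ∨ i - l < β := by
      by_contra hcon
      push_neg at hcon
      exact hout ⟨by omega, le_min hcon.1 hcon.2⟩
    obtain ⟨ho⟩ := case2 hi hj hl hij hα0 h2 h4 hδ0 hδjl h6' hout' φ ψ
    rw [hcomp, comp_isIso_eq_zero_iff, qmap_zero_iff]
    exact ⟨ho⟩

end DualNumberPaper
end
end

section
/- Let i, j, l ≥ 1 be integers and α, β ∈ ℤ with −j < α ≤ min(0, i−j), (i−j, α) ≠ (0, 0), −l < β−α ≤ min(0, j−l), and (j−l, β−α) ≠ (0, 0). Then for every pair of morphisms f : X_i → X_j[α] and g : X_j → X_l[β−α] in the homotopy category, the composite g[α] ∘ f : X_i → X_l[β] is zero. In other words, the composition of two morphisms of k_ε-type is always zero. -/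
open CategoryTheory CategoryTheory.Limits DualNumber

noncomputable section

namespace DualNumberPaper

variable (k : Type) [Field k]

lemma xmod_eq_zero {i n : ℤ} (h : ¬ inRange i n) (x : PLift (inRange i n) → DualNumber k) :
    x = 0 := funext fun q => absurd q.down h

lemma sq {i j α : ℤ} (φ : Xc k i ⟶ (Xc k j)⟦α⟧) (n m : ℤ) (h : n + 1 = m) (x : XMod k i n) :
    φ.f m ((XdL k i n m) x) = α.negOnePow • (XdL k j (n+α) (m+α)) (φ.f n x) := by
  have hc := φ.comm n m
  rw [show (Xc k i).d n m = ModuleCat.ofHom (XdL k i n m) from dif_pos h,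
    show ((Xc k j)⟦α⟧).d n m = α.negOnePow • (Xc k j).d (n+α) (m+α) from rfl,
    show (Xc k j).d (n+α) (m+α) = ModuleCat.ofHom (XdL k j (n+α) (m+α)) from dif_pos (by omega)] at hc
  have := congrArg (fun f => ModuleCat.Hom.hom f x) hc
  exact this.symm

/-- evaluation of sq at an entry -/
lemma sq_entry {i j α : ℤ} (φ : Xc k i ⟶ (Xc k j)⟦α⟧) (n m : ℤ) (h : n + 1 = m)
    (x : XMod k i n) (q : PLift (inRange j (m + α))) :
    φ.f m ((XdL k i n m) x) q =
      α.negOnePow • (if h' : inRange j (n + α) then ε * (φ.f n x) ⟨h'⟩ else 0) := by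
  have := congrFun (sq k φ n m h x) q
  rw [this]
  rfl

lemma eps_hom {i j α : ℤ} (hj : 1 ≤ j) (h1 : -j < α) (h2a : α ≤ 0) (h2b : α ≤ i - j)
    (h3 : ¬ (i - j = 0 ∧ α = 0)) (φ : Xc k i ⟶ (Xc k j)⟦α⟧) :
    ∀ (n : ℤ) (x : XMod k i n) (p : PLift (inRange j (n + α))), ε * (φ.f n x) p = 0 := by
  rcases eq_or_lt_of_le h2a with hα0 | hαneg
  · -- case α = 0, upward induction from n = -j
    subst hα0
    have hij : j < i := by omega
    have key : ∀ (m : ℕ) (n : ℤ), n = -j + m →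
        ∀ (x : XMod k i n) (p : PLift (inRange j (n + 0))), ε * (φ.f n x) p = 0 := by
      intro m
      induction m with
      | zero =>
        intro n hn x p
        obtain ⟨hp1, hp2⟩ := p.down
        have hn' : n = -j := by omega
        have hin : inRange i n := ⟨by omega, by omega⟩
        have hr : inRange i (n - 1) := ⟨by omega, by omega⟩
        have hs := sq_entry k φ (n-1) n (by ring) (fun _ => x ⟨hin⟩) p
        rw [dif_neg (show ¬ inRange j (n-1+0) by simp [inRange]; omega)] at hs
        have hL : (XdL k i (n-1) n) (fun _ => x ⟨hin⟩) = (ε : DualNumber k) • x := by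
          funext q
          show (if h : inRange i (n-1) then ε * x ⟨hin⟩ else 0) = ε * x q
          rw [dif_pos hr, Subsingleton.elim q (⟨hin⟩ : PLift (inRange i n))]
        rw [hL] at hs
        erw [map_smul] at hs
        rwa [smul_zero] at hs
      | succ m ih =>
        intro n hn x p
        obtain ⟨hp1, hp2⟩ := p.down
        have hn' : n = -j + (m : ℤ) + 1 := by push_cast at hn; omega
        have hin : inRange i n := ⟨by omega, by omega⟩
        have hr : inRange i (n - 1) := ⟨by omega, by omega⟩
        have hr' : inRange j (n - 1 + 0) := ⟨by omega, by omega⟩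
        have hs := sq_entry k φ (n-1) n (by ring) (fun _ => x ⟨hin⟩) p
        rw [dif_pos hr'] at hs
        have hL : (XdL k i (n-1) n) (fun _ => x ⟨hin⟩) = (ε : DualNumber k) • x := by
          funext q
          show (if h : inRange i (n-1) then ε * x ⟨hin⟩ else 0) = ε * x q
          rw [dif_pos hr, Subsingleton.elim q (⟨hin⟩ : PLift (inRange i n))]
        rw [hL, ih (n-1) (by push_cast; omega) _ ⟨hr'⟩, smul_zero] at hs
        erw [map_smul] at hs
        exact hs
    intro n x p
    have hn : -j ≤ n := by have := p.down.1; omega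
    exact key (n + j).toNat n (by omega) x p
  · -- case α ≤ -1, downward induction from n = -1
    have key : ∀ (m : ℕ) (n : ℤ), n = -1 - m →
        ∀ (x : XMod k i n) (p : PLift (inRange j (n + α))), ε * (φ.f n x) p = 0 := by
      intro m
      induction m with
      | zero =>
        intro n hn x p
        obtain ⟨hp1, hp2⟩ := p.down
        have hq : inRange j (n + 1 + α) := ⟨by omega, by omega⟩
        have hs := sq_entry k φ n (n+1) rfl x ⟨hq⟩
        rw [dif_pos p.down,
          xmod_eq_zero k (show ¬ inRange i (n+1) by simp [inRange]; omega) ((XdL k i n (n+1)) x)] at hs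
        erw [map_zero] at hs
        have h2 : α.negOnePow • (ε * (φ.f n) x ⟨p.down⟩) = 0 := by rw [← hs]; rfl
        rwa [smul_eq_zero_iff_eq] at h2
      | succ m ih =>
        intro n hn x p
        obtain ⟨hp1, hp2⟩ := p.down
        by_cases hin : inRange i n
        · have hq : inRange j (n + 1 + α) := ⟨by omega, by omega⟩
          have hs := sq_entry k φ n (n+1) rfl x ⟨hq⟩
          rw [dif_pos p.down] at hs
          have hL : (XdL k i n (n+1)) x
              = (ε : DualNumber k) • (fun _ : PLift (inRange i (n+1)) => x ⟨hin⟩) := by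
            funext q
            show (if h : inRange i n then ε * x ⟨h⟩ else 0) = ε * x ⟨hin⟩
            rw [dif_pos hin]
          rw [hL] at hs
          erw [map_smul] at hs
          have hent : ((ε : DualNumber k) • (φ.f (n+1)) (fun _ : PLift (inRange i (n+1)) => x ⟨hin⟩)) ⟨hq⟩ = 0 := by
            show ε * ((φ.f (n+1)) (fun _ : PLift (inRange i (n+1)) => x ⟨hin⟩)) ⟨hq⟩ = 0
            exact ih (n+1) (by push_cast at hn ⊢; omega) _ ⟨hq⟩
          rw [hent] at hs
          have h2 : α.negOnePow • (ε * (φ.f n) x ⟨p.down⟩) = 0 := hs.symm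
          rwa [smul_eq_zero_iff_eq] at h2
        · rw [xmod_eq_zero k hin x]; erw [map_zero]
          show ε * (0 : PLift (inRange j (n+α)) → DualNumber k) p = 0
          simp
    intro n x p
    by_cases hin : inRange i n
    · exact key (-1 - n).toNat n (by have := hin.2; omega) x p
    · rw [xmod_eq_zero k hin x]; erw [map_zero]
      show ε * (0 : PLift (inRange j (n+α)) → DualNumber k) p = 0
      simp

lemma eps_factor {i : ℤ} {n : ℤ} (y : PLift (inRange i n) → DualNumber k)
    (hy : ∀ p, ε * y p = 0) :
    y = (ε : DualNumber k) • (fun p => (TrivSqZeroExt.inl (TrivSqZeroExt.snd (y p)) : DualNumber k)) := by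
  funext p
  have hfst : TrivSqZeroExt.fst (y p) = 0 := by
    have := congrArg TrivSqZeroExt.snd (hy p)
    simpa [TrivSqZeroExt.snd_mul] using this
  show y p = ε * TrivSqZeroExt.inl (TrivSqZeroExt.snd (y p))
  ext <;> simp [TrivSqZeroExt.snd_mul, hfst]

lemma comp_eps_zero {i j l α β : ℤ} (hj : 1 ≤ j) (hl : 1 ≤ l)
    (h1 : -j < α) (h2 : α ≤ min 0 (i - j)) (h3 : ¬(i - j = 0 ∧ α = 0))
    (h4 : -l < β - α) (h5 : β - α ≤ min 0 (j - l)) (h6 : ¬(j - l = 0 ∧ β - α = 0))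
    (φ : Xc k i ⟶ (Xc k j)⟦α⟧) (ψ : Xc k j ⟶ (Xc k l)⟦β - α⟧) :
    φ ≫ (ψ⟦α⟧') = 0 := by
  have hφ := eps_hom k hj h1 (le_trans h2 (min_le_left _ _)) (le_trans h2 (by simp)) h3 φ
  have hψ := eps_hom k hl h4 (le_trans h5 (min_le_left _ _)) (le_trans h5 (by simp)) h6 ψ
  apply HomologicalComplex.hom_ext
  intro n
  apply ModuleCat.hom_ext
  apply LinearMap.ext
  intro x
  funext r
  show (ψ.f (n + α)) ((φ.f n) x) r = (0 : PLift (inRange l (n + α + (β - α))) → DualNumber k) r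
  rw [eps_factor k ((φ.f n) x) (fun p => hφ n x p)]
  erw [map_smul]
  show ε * _ = _
  rw [hψ (n + α) _ r]
  rfl

/-- the composition of two morphisms of `k_ε`-type is always zero. -/
theorem composition_eps_eps (i j l : ℤ) (hi : 1 ≤ i) (hj : 1 ≤ j) (hl : 1 ≤ l) (α β : ℤ)
    (h1 : -j < α) (h2 : α ≤ min 0 (i - j)) (h3 : (i - j, α) ≠ (0, 0))
    (h4 : -l < β - α) (h5 : β - α ≤ min 0 (j - l)) (h6 : (j - l, β - α) ≠ (0, 0))
    (f : XK k i ⟶ (XK k j)⟦α⟧) (g : XK k j ⟶ (XK k l)⟦β - α⟧) :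
    f ≫ (shiftFunctor (K k) α).map g = 0 := by

  have h3' : ¬ (i - j = 0 ∧ α = 0) := fun ⟨a, b⟩ => h3 (by rw [a, b])
  have h6' : ¬ (j - l = 0 ∧ β - α = 0) := fun ⟨a, b⟩ => h6 (by rw [a, b])
  set Q := HomotopyCategory.quotient (ModuleCat (DualNumber k)) (ComplexShape.up ℤ) with hQ
  obtain ⟨ψ, hψ⟩ := Q.map_surjective
    (g ≫ (Q.commShiftIso (β - α)).inv.app (Xc k l) :
      Q.obj (Xc k j) ⟶ Q.obj ((Xc k l)⟦β - α⟧))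
  obtain ⟨φ, hφ⟩ := Q.map_surjective
    (f ≫ (Q.commShiftIso α).inv.app (Xc k j) :
      Q.obj (Xc k i) ⟶ Q.obj ((Xc k j)⟦α⟧))
  have hzero : φ ≫ (ψ⟦α⟧') = 0 := comp_eps_zero k hj hl h1 h2 h3' h4 h5 h6' φ ψ
  have hg : g = Q.map ψ ≫ (Q.commShiftIso (β - α)).hom.app (Xc k l) := by
    rw [hψ]; simp
    exact (Category.comp_id g).symm
  have hnat := (Q.commShiftIso α).hom.naturality ψ
  -- hnat : Q.map (ψ⟦α⟧') ≫ e.hom.app _ = e.hom.app _ ≫ (Q.map ψ)⟦α⟧'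
  have hmap : (shiftFunctor (K k) α).map (Q.map ψ) =
      (Q.commShiftIso α).inv.app (Xc k j) ≫ Q.map (ψ⟦α⟧') ≫
        (Q.commShiftIso α).hom.app ((Xc k l)⟦β - α⟧) := by
    calc (shiftFunctor (K k) α).map (Q.map ψ)
        = (Q.commShiftIso α).inv.app (Xc k j) ≫ ((Q.commShiftIso α).hom.app (Xc k j) ≫
            (shiftFunctor (K k) α).map (Q.map ψ)) := by simp
      _ = _ := by
          simp only [Functor.comp_map] at hnat
          rw [← hnat]
  rw [hg, Functor.map_comp, hmap]
  simp only [← Category.assoc]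
  rw [← hφ, ← Functor.map_comp, hzero]
  simp

end DualNumberPaper
end
end

section
/- For every integer i ≥ 1, the complex X_i is an indecomposable object of the homotopy category of complexes of A-modules: X_i is not isomorphic to the zero object, and whenever X_i ≅ Y ⊕ Z in the homotopy category, either Y ≅ 0 or Z ≅ 0. -/
open CategoryTheory CategoryTheory.Limits DualNumber

noncomputable section

namespace DualNumberPaper

variable (k : Type) [Field k]

/-- An object `X` of a preadditive category is indecomposable if, whenever `X` is
exhibited as a direct sum (biproduct) of two objects `Y` and `Z`, one of `Y`, `Z`
is a zero object. -/
def Indecomposable {C : Type*} [Category C] [Preadditive C] (X : C) : Prop :=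
  ∀ (Y Z : C) (iY : Y ⟶ X) (pY : X ⟶ Y) (iZ : Z ⟶ X) (pZ : X ⟶ Z),
    iY ≫ pY = 𝟙 Y → iZ ≫ pZ = 𝟙 Z → iY ≫ pZ = 0 → iZ ≫ pY = 0 →
    pY ≫ iY + pZ ≫ iZ = 𝟙 X → IsZero Y ∨ IsZero Z

set_option linter.unusedSectionVars false

section Helpers

variable {k} {i : ℤ}

lemma isEmpty_plift {n : ℤ} (h : ¬ inRange i n) : IsEmpty (PLift (inRange i n)) :=
  ⟨fun x => h x.down⟩

lemma subsingleton_M {n : ℤ} (h : ¬ inRange i n) :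
    Subsingleton (PLift (inRange i n) → DualNumber k) := by
  have := isEmpty_plift h
  infer_instance

lemma Xc_d_eq {n m : ℤ} (hnm : n + 1 = m) : (Xc k i).d n m = ModuleCat.ofHom (XdL k i n m) :=
  dif_pos hnm

lemma ext_range {n : ℤ} (h : inRange i n) {x y : PLift (inRange i n) → DualNumber k}
    (hxy : x ⟨h⟩ = y ⟨h⟩) : x = y :=
  funext fun pt => by rw [Subsingleton.elim pt ⟨h⟩]; exact hxy

/-- The constant function 1 in degree `n`. -/
def onev (n : ℤ) : PLift (inRange i n) → DualNumber k := fun _ => 1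

lemma eq_smul_one {n : ℤ} (h : inRange i n) (x : PLift (inRange i n) → DualNumber k) :
    x = x ⟨h⟩ • (onev n : PLift (inRange i n) → DualNumber k) := by
  apply ext_range h
  simp [onev]

lemma map_apply_eq {n : ℤ} (h : inRange i n) (f : (Xc k i).X n ⟶ (Xc k i).X n)
    (x : PLift (inRange i n) → DualNumber k) :
    f x = x ⟨h⟩ • f (onev n) := by
  conv_lhs => rw [eq_smul_one h x]
  exact map_smul f.hom _ _

end Helpers
section Phi0

variable {k} {i : ℤ}

lemma sq_zero_of_fst {b : DualNumber k} (hb : b.fst = 0) : b * b = 0 := by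
  refine TrivSqZeroExt.ext ?_ ?_
  · rw [TrivSqZeroExt.fst_mul, hb, zero_mul, TrivSqZeroExt.fst_zero]
  · rw [TrivSqZeroExt.snd_mul, hb, TrivSqZeroExt.snd_zero, MulOpposite.op_zero,
      zero_smul, zero_smul, add_zero]

lemma eps_fst_cancel {a b : DualNumber k} (h : ε * a = ε * b) : a.fst = b.fst := by
  have h2 := congrArg TrivSqZeroExt.snd h
  rw [TrivSqZeroExt.snd_mul, TrivSqZeroExt.snd_mul, DualNumber.fst_eps, DualNumber.snd_eps,
    zero_smul, zero_smul, zero_add, zero_add, op_smul_eq_mul,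
    op_smul_eq_mul, one_mul, one_mul] at h2
  exact h2

/-- The scalar `φ₀ f` : the residue of the degree `-1` component of `f`. -/
def phi0 (h1 : inRange i (-1)) (f : Xc k i ⟶ Xc k i) : k :=
  ((f.f (-1)) (onev (-1)) ⟨h1⟩).fst

lemma d_one_eq {n m : ℤ} (hm : n + 1 = m) (hn : inRange i n) :
    (Xc k i).d n m (onev n) = (ε : DualNumber k) • (onev m : PLift (inRange i m) → DualNumber k) := by
  rw [Xc_d_eq hm]
  funext pt
  show (if h : inRange i n then ε * (onev n : PLift (inRange i n) → DualNumber k) ⟨h⟩ else 0) = _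
  rw [dif_pos hn]
  simp [onev]

lemma fst_step (f : Xc k i ⟶ Xc k i) {n m : ℤ} (hm : n + 1 = m) (hn : inRange i n)
    (hm' : inRange i m) :
    ((f.f n) (onev n) ⟨hn⟩).fst = ((f.f m) (onev m) ⟨hm'⟩).fst := by
  subst hm
  have hc := f.comm' n (n + 1) (by simp)
  have hc' := congrFun (congrArg (fun (φ : XMod k i n ⟶ XMod k i (n+1)) => φ (onev n)) hc) ⟨hm'⟩
  apply eps_fst_cancel
  have lhs : (f.f n ≫ (Xc k i).d n (n+1)) (onev n) ⟨hm'⟩ = ε * (f.f n) (onev n) ⟨hn⟩ := by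
    show (Xc k i).d n (n+1) ((f.f n) (onev n)) ⟨hm'⟩ = _
    rw [Xc_d_eq rfl]
    show (if h : inRange i n then ε * ((f.f n) (onev n)) ⟨h⟩ else 0) = _
    rw [dif_pos hn]
  have rhs : ((Xc k i).d n (n+1) ≫ f.f (n+1)) (onev n) ⟨hm'⟩ = ε * (f.f (n+1)) (onev (n+1)) ⟨hm'⟩ := by
    show (f.f (n+1)) ((Xc k i).d n (n+1) (onev n)) ⟨hm'⟩ = _
    rw [d_one_eq rfl hn]
    exact congrFun (map_smul (f.f (n+1)).hom ε (onev (n+1))) ⟨hm'⟩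
  rw [← lhs, ← rhs]
  exact hc' 

lemma fst_all (h1 : inRange i (-1)) (f : Xc k i ⟶ Xc k i) :
    ∀ n : ℤ, ∀ hn : inRange i n, ((f.f n) (onev n) ⟨hn⟩).fst = phi0 h1 f := by
  have key : ∀ n ≤ (-1 : ℤ), ∀ hn : inRange i n,
      ((f.f n) (onev n) ⟨hn⟩).fst = phi0 h1 f := by
    refine Int.le_induction_down ?_ ?_
    · intro hn
      rfl
    · intro n _ IH hn
      have hn' : inRange i n := by unfold inRange at *; omega
      rw [fst_step f (by omega : n - 1 + 1 = n) hn hn']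
      exact IH hn'
  intro n hn
  exact key n (by unfold inRange at hn; omega) hn

end Phi0
section Phi0Props

variable {k} {i : ℤ}

lemma phi0_id (h1 : inRange i (-1)) : phi0 h1 (𝟙 (Xc k i)) = 1 := rfl

lemma phi0_zero (h1 : inRange i (-1)) : phi0 h1 (0 : Xc k i ⟶ Xc k i) = 0 := rfl

lemma phi0_add (h1 : inRange i (-1)) (f g : Xc k i ⟶ Xc k i) :
    phi0 h1 (f + g) = phi0 h1 f + phi0 h1 g := rfl

lemma phi0_comp (h1 : inRange i (-1)) (f g : Xc k i ⟶ Xc k i) :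
    phi0 h1 (f ≫ g) = phi0 h1 f * phi0 h1 g := by
  unfold phi0
  rw [HomologicalComplex.comp_f]
  show ((g.f (-1)) ((f.f (-1)) (onev (-1))) ⟨h1⟩).fst = _
  have e1 : (g.f (-1)) ((f.f (-1)) (onev (-1)))
      = (((f.f (-1)) (onev (-1))) ⟨h1⟩) • ((g.f (-1)) (onev (-1))) :=
    map_apply_eq h1 (g.f (-1)) ((f.f (-1)) (onev (-1)))
  rw [e1]
  show ((((f.f (-1)) (onev (-1))) ⟨h1⟩) * (((g.f (-1)) (onev (-1))) ⟨h1⟩)).fst = _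
  rw [TrivSqZeroExt.fst_mul]

lemma phi0_homotopy (h1 : inRange i (-1)) {f g : Xc k i ⟶ Xc k i} (H : Homotopy f g) :
    phi0 h1 f = phi0 h1 g := by
  have hc := H.comm (-1)
  unfold phi0
  rw [hc]
  have expand : ((dNext (-1) H.hom + prevD (-1) H.hom + g.f (-1)) (onev (-1))) ⟨h1⟩
      = (dNext (-1) H.hom (onev (-1))) ⟨h1⟩ + (prevD (-1) H.hom (onev (-1))) ⟨h1⟩
        + (g.f (-1) (onev (-1))) ⟨h1⟩ := rfl
  rw [expand, TrivSqZeroExt.fst_add, TrivSqZeroExt.fst_add]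
  have t1 : ((dNext (-1) H.hom) (onev (-1)) ⟨h1⟩).fst = 0 := by
    rw [dNext_eq H.hom (show (ComplexShape.up ℤ).Rel (-1) 0 by simp)]
    have hs : Subsingleton (PLift (inRange i 0) → DualNumber k) :=
      subsingleton_M (by unfold inRange; omega)
    have h0 : (Xc k i).d (-1) 0 (onev (-1)) = 0 := @Subsingleton.elim _ hs _ _
    show ((H.hom 0 (-1)) ((Xc k i).d (-1) 0 (onev (-1))) ⟨h1⟩).fst = 0
    rw [h0, map_zero]
    rfl
  have t2 : ((prevD (-1) H.hom) (onev (-1)) ⟨h1⟩).fst = 0 := by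
    rw [prevD_eq H.hom (show (ComplexShape.up ℤ).Rel (-2) (-1) by simp)]
    show (((Xc k i).d (-2) (-1)) ((H.hom (-1) (-2)) (onev (-1))) ⟨h1⟩).fst = 0
    rw [Xc_d_eq (by norm_num : (-2 : ℤ) + 1 = -1)]
    show ((XdL k i (-2) (-1)) ((H.hom (-1) (-2)) (onev (-1))) ⟨h1⟩).fst = 0
    have hv : (XdL k i (-2) (-1)) ((H.hom (-1) (-2)) (onev (-1))) ⟨h1⟩
        = if h : inRange i (-2) then (ε : DualNumber k) * ((H.hom (-1) (-2)) (onev (-1))) ⟨h⟩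
          else 0 := rfl
    rw [hv]
    split_ifs with h
    · rw [TrivSqZeroExt.fst_mul, DualNumber.fst_eps, zero_mul]
    · rfl
  rw [t1, t2, zero_add, zero_add]

lemma comp_self_zero (h1 : inRange i (-1)) (f : Xc k i ⟶ Xc k i) (hf : phi0 h1 f = 0) :
    f ≫ f = 0 := by
  apply HomologicalComplex.hom_ext
  intro n
  rw [HomologicalComplex.comp_f, HomologicalComplex.zero_f]
  by_cases hn : inRange i n
  · apply ModuleCat.hom_ext
    apply LinearMap.ext
    intro x
    show (f.f n) ((f.f n) x) = 0
    have ha : ((f.f n) (onev n) ⟨hn⟩).fst = 0 := by rw [fst_all h1 f n hn, hf]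
    have e1 : (f.f n) x = x ⟨hn⟩ • (f.f n) (onev n) := map_apply_eq hn (f.f n) x
    have e2 : (f.f n) ((f.f n) x) = x ⟨hn⟩ • ((f.f n) ((f.f n) (onev n))) := by
      conv_lhs => rw [e1]
      exact map_smul (f.f n).hom _ _
    have e3 : (f.f n) ((f.f n) (onev n))
        = (((f.f n) (onev n)) ⟨hn⟩) • (f.f n) (onev n) :=
      map_apply_eq hn (f.f n) ((f.f n) (onev n))
    rw [e2, e3]
    funext pt
    rw [Subsingleton.elim pt (⟨hn⟩ : PLift (inRange i n))]
    show x ⟨hn⟩ * ((((f.f n) (onev n)) ⟨hn⟩) * (((f.f n) (onev n)) ⟨hn⟩)) = 0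
    rw [sq_zero_of_fst ha, mul_zero]
  · have hs : Subsingleton (PLift (inRange i n) → DualNumber k) := subsingleton_M hn
    apply ModuleCat.hom_ext
    apply LinearMap.ext
    intro x
    exact @Subsingleton.elim _ hs _ _

end Phi0Props
section KLevel

variable {k} {i : ℤ}

/-- The invariant `Φ`, descended to the homotopy category. -/
def Phi (h1 : inRange i (-1)) (F : XK k i ⟶ XK k i) : k :=
  phi0 h1 ((HomotopyCategory.quotient _ _).preimage F)

lemma Phi_map (h1 : inRange i (-1)) (f : Xc k i ⟶ Xc k i) :
    Phi h1 ((HomotopyCategory.quotient _ _).map f) = phi0 h1 f :=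
  phi0_homotopy h1 (HomotopyCategory.homotopyOfEq _ _ (by rw [Functor.map_preimage]))

lemma Phi_id (h1 : inRange i (-1)) : Phi h1 (𝟙 (XK k i)) = 1 := by
  rw [show (𝟙 (XK k i)) = (HomotopyCategory.quotient _ _).map (𝟙 (Xc k i)) from
    ((HomotopyCategory.quotient _ _).map_id (Xc k i)).symm, Phi_map, phi0_id]

lemma Phi_zero (h1 : inRange i (-1)) : Phi h1 (0 : XK k i ⟶ XK k i) = 0 := by
  rw [show (0 : XK k i ⟶ XK k i) = (HomotopyCategory.quotient _ _).map 0 from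
    ((HomotopyCategory.quotient _ _).map_zero _ _).symm, Phi_map, phi0_zero]

lemma Phi_add (h1 : inRange i (-1)) (F G : XK k i ⟶ XK k i) :
    Phi h1 (F + G) = Phi h1 F + Phi h1 G := by
  obtain ⟨f, rfl⟩ := (HomotopyCategory.quotient _ _).map_surjective F
  obtain ⟨g, rfl⟩ := (HomotopyCategory.quotient _ _).map_surjective G
  rw [← Functor.map_add, Phi_map, Phi_map, Phi_map, phi0_add]

lemma Phi_comp (h1 : inRange i (-1)) (F G : XK k i ⟶ XK k i) :
    Phi h1 (F ≫ G) = Phi h1 F * Phi h1 G := by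
  obtain ⟨f, rfl⟩ := (HomotopyCategory.quotient _ _).map_surjective F
  obtain ⟨g, rfl⟩ := (HomotopyCategory.quotient _ _).map_surjective G
  rw [← Functor.map_comp, Phi_map, Phi_map, Phi_map, phi0_comp]

lemma Phi_nilsq (h1 : inRange i (-1)) (F : XK k i ⟶ XK k i) (hF : Phi h1 F = 0) :
    F ≫ F = 0 := by
  obtain ⟨f, rfl⟩ := (HomotopyCategory.quotient _ _).map_surjective F
  rw [Phi_map] at hF
  rw [← Functor.map_comp, comp_self_zero h1 f hF, Functor.map_zero]

end KLevel
/-- for every `i ≥ 1` the complex `X_i` is a nonzero indecomposable object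
of the homotopy category of complexes of modules over the dual numbers. -/
theorem Xi_indecomposable (i : ℤ) (hi : 1 ≤ i) :
    ¬ IsZero (XK k i) ∧ Indecomposable (XK k i) := by
  have h1 : inRange i (-1) := by unfold inRange; omega
  constructor
  · intro hz
    have hid : 𝟙 (XK k i) = 0 := (IsZero.iff_id_eq_zero _).mp hz
    have : (1 : k) = 0 := by
      calc (1 : k) = Phi h1 (𝟙 (XK k i)) := (Phi_id h1).symm
        _ = Phi h1 0 := by rw [hid]
        _ = 0 := Phi_zero h1
    exact one_ne_zero this
  · intro Y Z iY pY iZ pZ hY hZ hYZ hZY hsum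
    have hid1 : (pY ≫ iY) ≫ (pY ≫ iY) = pY ≫ iY := by
      calc (pY ≫ iY) ≫ (pY ≫ iY) = pY ≫ (iY ≫ pY) ≫ iY := by simp
        _ = pY ≫ iY := by rw [hY, Category.id_comp]
    have hid2 : (pZ ≫ iZ) ≫ (pZ ≫ iZ) = pZ ≫ iZ := by
      calc (pZ ≫ iZ) ≫ (pZ ≫ iZ) = pZ ≫ (iZ ≫ pZ) ≫ iZ := by simp
        _ = pZ ≫ iZ := by rw [hZ, Category.id_comp]
    have hsum' : Phi h1 (pY ≫ iY) + Phi h1 (pZ ≫ iZ) = 1 := by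
      rw [← Phi_add, hsum, Phi_id]
    have hsq : Phi h1 (pY ≫ iY) * Phi h1 (pY ≫ iY) = Phi h1 (pY ≫ iY) := by
      rw [← Phi_comp, hid1]
    have hcases : Phi h1 (pY ≫ iY) = 0 ∨ Phi h1 (pY ≫ iY) = 1 := by
      rcases mul_eq_zero.mp (show Phi h1 (pY ≫ iY) * (Phi h1 (pY ≫ iY) - 1) = 0 by
        rw [mul_sub, mul_one, hsq, sub_self]) with h | h
      · exact Or.inl h
      · exact Or.inr (sub_eq_zero.mp h)
    rcases hcases with h | h
    · left
      have hz : pY ≫ iY = 0 := by rw [← hid1]; exact Phi_nilsq h1 _ h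
      rw [IsZero.iff_id_eq_zero]
      calc 𝟙 Y = (iY ≫ pY) ≫ (iY ≫ pY) := by rw [hY, Category.id_comp]
        _ = iY ≫ (pY ≫ iY) ≫ pY := by simp
        _ = 0 := by rw [hz]; simp
    · right
      have h2 : Phi h1 (pZ ≫ iZ) = 0 := by
        rw [h] at hsum'
        exact add_eq_left.mp hsum' 
      have hz : pZ ≫ iZ = 0 := by rw [← hid2]; exact Phi_nilsq h1 _ h2
      rw [IsZero.iff_id_eq_zero]
      calc 𝟙 Z = (iZ ≫ pZ) ≫ (iZ ≫ pZ) := by rw [hZ, Category.id_comp]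
        _ = iZ ≫ (pZ ≫ iZ) ≫ pZ := by simp
        _ = 0 := by rw [hz]; simp

end DualNumberPaper
end
end
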